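/- arXiv:1703.01014 — 4 statements merged into one kernel-verified Lean document; each statement's English description precedes it below -/
import Mathlib

section
/- Let m ≥ 2 and T ≥ 1 be integers, let E be a real vector space, let a_1,…,a_m : E → ℝ be linear functionals, let b_1,…,b_m ∈ ℝ and ρ_1,…,ρ_m > 0, and set η = √(log m / T); assume η ≤ 1/2. Let v_1,…,v_T ∈ E, and define the MW weight sequence with losses ℓ_t(i) = (b_i − a_i(v_t))/ρ_i. Assume that for every t and i, a_i(v_t) − b_i ∈ [−ρ_i, ρ_i], and that for every t, Σ_{i=1}^m q^{(t)}_i (b_i − a_i(v_t))/ρ_i ≥ 0 (i.e., v_t is feasible for the q^{(t)}-weighted combination of the constraints). Then the averaged point v̄ = (1/T) Σ_{t=1}^T v_t satisfies a_i(v̄) ≤ b_i + 2 ρ_i √(log m / T) for every i = 1,…,m. -/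
/-!
The weights `p t i = ∏_{s<t} (1 - η ℓ s i)` are the multiplicative-weights weights. Feasibility of
each `v t` for the `q t`-weighted constraint says the weighted loss is nonnegative, so the total
weight never increases and stays at most `m`. On the other hand `1 - x ≥ exp (-x - x²)` for
`|x| ≤ 1/2`, so a single weight satisfies `p T i ≥ exp (-η ∑ₜ ℓ t i - T η²)`. Comparing,
`-∑ₜ ℓ t i ≤ log m / η + T η = 2 T η` for `η = √(log m / T)`, which after rescaling by `ρ i / T`
is the bound on the averaged point.
-/

open Finset Real

lemma Real.exp_neg_sub_sq_le_one_sub {x : ℝ} (hx : |x| ≤ 1 / 2) : exp (-x - x ^ 2) ≤ 1 - x := by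
  obtain ⟨hx₁, hx₂⟩ := abs_le.mp hx
  set y := -x - x ^ 2
  have hy : |y| ≤ 1 := abs_le.mpr ⟨by nlinarith, by nlinarith⟩
  have htaylor := (abs_le.mp (Real.exp_bound hy (n := 4) (by norm_num))).2
  have hy4 : |y| ^ 4 = y ^ 4 := (by decide : Even 4).pow_abs y
  simp only [sum_range_succ, sum_range_zero, hy4] at htaylor
  norm_num [Nat.factorial] at htaylor
  nlinarith [sq_nonneg x,
    mul_nonneg (mul_nonneg (sq_nonneg x) (by linarith : (0 : ℝ) ≤ 1 / 2 - x))
      (by linarith : (0 : ℝ) ≤ 1 / 2 + x),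
    mul_nonneg (mul_nonneg (pow_two_nonneg (x ^ 2)) (by linarith : (0 : ℝ) ≤ 1 / 2 - x))
      (by linarith : (0 : ℝ) ≤ 1 / 2 + x)]

lemma abs_sub_div_le_one_of_mem_Icc {x b ρ : ℝ} (hρ : 0 < ρ) (h : x - b ∈ Set.Icc (-ρ) ρ) :
    |(b - x) / ρ| ≤ 1 := by
  rw [abs_div, abs_of_pos hρ, div_le_one hρ, abs_sub_comm]
  exact abs_le.mpr h

lemma sum_mul_nonneg_of_sum_div_mul_nonneg {ι : Type*} [Fintype ι] {w x : ι → ℝ}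
    (hw : 0 < ∑ i, w i) (h : 0 ≤ ∑ i, (w i / ∑ j, w j) * x i) : 0 ≤ ∑ i, w i * x i := by
  simp only [div_mul_eq_mul_div, ← sum_div] at h
  simpa using (le_div_iff₀ hw).mp h

section MultiplicativeWeights

variable {ι : Type*} {η : ℝ} {ℓ : ℕ → ι → ℝ} {T : ℕ}

def mwWeight (η : ℝ) (ℓ : ℕ → ι → ℝ) (t : ℕ) (i : ι) : ℝ :=
  ∏ s ∈ range t, (1 - η * ℓ s i)

lemma mwWeight_succ (t : ℕ) (i : ι) :
    mwWeight η ℓ (t + 1) i = mwWeight η ℓ t i * (1 - η * ℓ t i) :=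
  prod_range_succ _ _

lemma eq_mwWeight {p : ℕ → ι → ℝ} (hp0 : ∀ i, p 0 i = 1)
    (hpsucc : ∀ t i, p (t + 1) i = p t i * (1 - η * ℓ t i)) (t : ℕ) (i : ι) :
    p t i = mwWeight η ℓ t i := by
  induction t with
  | zero => simp [mwWeight, hp0]
  | succ t ih => rw [hpsucc, mwWeight_succ, ih]

lemma sum_mwWeight_le_card [Fintype ι] (hη : 0 ≤ η)
    (hfeas : ∀ t < T, 0 ≤ ∑ i, mwWeight η ℓ t i * ℓ t i) :
    ∀ t ≤ T, ∑ i, mwWeight η ℓ t i ≤ Fintype.card ι := by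
  intro t
  induction t with
  | zero => simp [mwWeight]
  | succ t ih =>
    intro ht
    have hdrop : ∑ i, mwWeight η ℓ (t + 1) i
        = ∑ i, mwWeight η ℓ t i - η * ∑ i, mwWeight η ℓ t i * ℓ t i := by
      simp only [mwWeight_succ, mul_sum, ← sum_sub_distrib]
      exact sum_congr rfl fun i _ => by ring
    rw [hdrop]
    nlinarith [ih (by omega), mul_nonneg hη (hfeas t (by omega))]

lemma exp_sum_le_mwWeight (hη : |η| ≤ 1 / 2) (hℓ : ∀ t < T, ∀ i, |ℓ t i| ≤ 1) (i : ι) :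
    ∀ t ≤ T, exp (∑ s ∈ range t, (-(η * ℓ s i) - η ^ 2)) ≤ mwWeight η ℓ t i := by
  intro t ht
  rw [exp_sum]
  refine prod_le_prod (fun _ _ => (exp_pos _).le) fun s hs => ?_
  have hℓs := hℓ s (by simp at hs; omega) i
  have hsmall : |η * ℓ s i| ≤ 1 / 2 := by
    rw [abs_mul]; nlinarith [abs_nonneg η, abs_nonneg (ℓ s i)]
  calc exp (-(η * ℓ s i) - η ^ 2) ≤ exp (-(η * ℓ s i) - (η * ℓ s i) ^ 2) := by
        refine exp_le_exp.mpr (sub_le_sub_left ?_ _)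
        rw [mul_pow, ← sq_abs (ℓ s i)]
        exact mul_le_of_le_one_right (sq_nonneg η) (pow_le_one₀ (abs_nonneg _) hℓs)
    _ ≤ 1 - η * ℓ s i := exp_neg_sub_sq_le_one_sub hsmall

lemma mwWeight_pos (hη : |η| ≤ 1 / 2) (hℓ : ∀ t < T, ∀ i, |ℓ t i| ≤ 1) (i : ι) {t : ℕ}
    (ht : t ≤ T) : 0 < mwWeight η ℓ t i :=
  (exp_pos _).trans_le (exp_sum_le_mwWeight hη hℓ i t ht)

theorem neg_sum_loss_le_of_mwWeight [Fintype ι] (hη₀ : 0 < η) (hη : η ≤ 1 / 2)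
    (hℓ : ∀ t < T, ∀ i, |ℓ t i| ≤ 1)
    (hfeas : ∀ t < T, 0 ≤ ∑ i, mwWeight η ℓ t i * ℓ t i) (i : ι) :
    -∑ t ∈ range T, ℓ t i ≤ log (Fintype.card ι) / η + T * η := by
  have hη' : |η| ≤ 1 / 2 := by rwa [abs_of_pos hη₀]
  have hexp : exp (∑ s ∈ range T, (-(η * ℓ s i) - η ^ 2)) ≤ Fintype.card ι :=
    calc _ ≤ mwWeight η ℓ T i := exp_sum_le_mwWeight hη' hℓ i T le_rfl
      _ ≤ ∑ j, mwWeight η ℓ T j :=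
        single_le_sum (fun j _ => (mwWeight_pos hη' hℓ j le_rfl).le) (mem_univ i)
      _ ≤ Fintype.card ι := sum_mwWeight_le_card hη₀.le hfeas T le_rfl
  have hcard : (0 : ℝ) < Fintype.card ι := by exact_mod_cast Fintype.card_pos_iff.mpr ⟨i⟩
  rw [← le_log_iff_exp_le hcard, sum_sub_distrib, sum_neg_distrib, ← mul_sum, sum_const,
    card_range, nsmul_eq_mul] at hexp
  rw [div_add' _ _ _ hη₀.ne', le_div_iff₀ hη₀]
  nlinarith

end MultiplicativeWeights

lemma apply_average_le {E : Type*} [AddCommGroup E] [Module ℝ E] (a : E →ₗ[ℝ] ℝ) (v : ℕ → E)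
    {T : ℕ} (hT : 0 < T) {b ρ c : ℝ} (hρ : 0 < ρ)
    (h : ∑ t ∈ range T, (a (v t) - b) / ρ ≤ T * c) :
    a ((T : ℝ)⁻¹ • ∑ t ∈ range T, v t) ≤ b + ρ * c := by
  have hT' : (0 : ℝ) < T := by exact_mod_cast hT
  rw [← sum_div, div_le_iff₀ hρ, sum_sub_distrib, sum_const, card_range, nsmul_eq_mul] at h
  rw [map_smul, map_sum, smul_eq_mul, inv_mul_le_iff₀ hT']
  linarith

/-- MW for linear feasibility, Theorem `thm:mw`.
Let `m ≥ 2`, `T ≥ 1`, `E` a real vector space, `a i : E →ₗ[ℝ] ℝ` linear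
functionals, `b i : ℝ`, `ρ i > 0`, and `η = √(log m / T) ≤ 1/2`.  Run MW on
the points `v 0, …, v (T-1)` with losses `ℓ t i = (b i - a i (v t)) / ρ i`:
`p 0 i = 1`, `p (t+1) i = p t i * (1 - η * ℓ t i)`, `q t i = p t i / ∑ i', p t i'`.
If every returned point satisfies `a i (v t) - b i ∈ [-ρ i, ρ i]` and is
feasible for the `q t`-weighted combined constraint,
i.e. `∑ i, q t i * (b i - a i (v t)) / ρ i ≥ 0`, then the averaged point
`v̄ = (1/T) ∑_{t<T} v t` satisfies `a i v̄ ≤ b i + 2 ρ i √(log m / T)` for all `i`. -/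
theorem stmt_1 {E : Type*} [AddCommGroup E] [Module ℝ E]
    (m T : ℕ) (hm : 2 ≤ m) (hT : 1 ≤ T)
    (a : Fin m → E →ₗ[ℝ] ℝ) (b ρ : Fin m → ℝ) (hρ : ∀ i, 0 < ρ i)
    (hη : Real.sqrt (Real.log m / T) ≤ 1 / 2)
    (v : ℕ → E)
    (p : ℕ → Fin m → ℝ)
    (hp0 : ∀ i, p 0 i = 1)
    (hpsucc : ∀ t i, p (t + 1) i
      = p t i * (1 - Real.sqrt (Real.log m / T) * ((b i - a i (v t)) / ρ i)))
    (hbound : ∀ t, t < T → ∀ i, a i (v t) - b i ∈ Set.Icc (-ρ i) (ρ i))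
    (hfeas : ∀ t, t < T →
      0 ≤ ∑ i : Fin m, (p t i / ∑ i' : Fin m, p t i') * ((b i - a i (v t)) / ρ i)) :
    ∀ i : Fin m, a i ((T : ℝ)⁻¹ • ∑ t ∈ Finset.range T, v t)
      ≤ b i + 2 * ρ i * Real.sqrt (Real.log m / T) := by
  intro i
  set η := √(log m / T)
  set ℓ : ℕ → Fin m → ℝ := fun t i => (b i - a i (v t)) / ρ i
  have hratio : 0 < log m / T := div_pos (log_pos (by exact_mod_cast hm)) (by exact_mod_cast hT)
  have hη₀ : 0 < η := sqrt_pos.mpr hratio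
  have hℓ : ∀ t < T, ∀ i, |ℓ t i| ≤ 1 := fun t ht i =>
    abs_sub_div_le_one_of_mem_Icc (hρ i) (hbound t ht i)
  have hp := eq_mwWeight (ℓ := ℓ) hp0 hpsucc
  have hfeas' : ∀ t < T, 0 ≤ ∑ i, mwWeight η ℓ t i * ℓ t i := fun t ht =>
    sum_mul_nonneg_of_sum_div_mul_nonneg
      (sum_pos (fun j _ => mwWeight_pos (by rwa [abs_of_pos hη₀]) hℓ j ht.le) ⟨i, mem_univ i⟩)
      (by simpa only [hp] using hfeas t ht)
  have hlog : log m / η = T * η := by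
    rw [div_eq_iff hη₀.ne', mul_assoc, ← sq, sq_sqrt hratio.le]
    field_simp
  have hregret := neg_sum_loss_le_of_mwWeight hη₀ hη hℓ hfeas' i
  rw [Fintype.card_fin, hlog] at hregret
  refine (apply_average_le (a i) v hT (b := b i) (c := 2 * η) (hρ i) ?_).trans_eq (by ring)
  calc ∑ t ∈ range T, (a i (v t) - b i) / ρ i = -∑ t ∈ range T, ℓ t i := by
        rw [← sum_neg_distrib]; exact sum_congr rfl fun t _ => by simp only [ℓ]; ring
    _ ≤ T * (2 * η) := by linarith
end

section
/- Let (Ω, μ) be a probability space, let 𝒳 be a measurable space, let X : Ω → 𝒳 be measurable, let C : Ω → ℝ be integrable with 0 ≤ C ≤ 1 almost surely, and let g, f⋆ : 𝒳 → ℝ be measurable with values in [0,1]. Let q : 𝒳 → {0,1} be measurable and set Q = q ∘ X. Assume realizability: the conditional expectation of C given the σ-algebra generated by X equals f⋆ ∘ X almost surely. Define the excess-square-loss random variable M = Q · ((g(X) − C)² − (f⋆(X) − C)²). Then (i) E[M] = E[Q · (g(X) − f⋆(X))²], and (ii) Var[M] ≤ E[M²] ≤ 4 E[M] = 4 E[Q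 · (g(X) − f⋆(X))²]. -/
/-!
Expanding the squares, `M = Q (g(X) - f⋆(X))² + 2 Q (g(X) - f⋆(X)) (f⋆(X) - C)`. The factor
`Q (g(X) - f⋆(X))` is bounded and `σ(X)`-measurable, and realizability makes the residual
`f⋆(X) - C` orthogonal to every such function, so the cross term has mean zero. For the second
moment, `(g - C)² - (f⋆ - C)² = (g - f⋆) (g + f⋆ - 2C)` with `|g + f⋆ - 2C| ≤ 2` and `Q² = Q`,
whence `M² ≤ 4 Q (g(X) - f⋆(X))²` pointwise.
-/

open MeasureTheory ProbabilityTheory Set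

theorem integral_mul_sub_eq_zero_of_ae_eq_condExp {Ω : Type*} {m mΩ : MeasurableSpace Ω}
    {μ : Measure Ω} (hm : m ≤ mΩ) [SigmaFinite (μ.trim hm)] {φ C f : Ω → ℝ}
    (hφ : StronglyMeasurable[m] φ) {c : ℝ} (hφc : ∀ᵐ ω ∂μ, ‖φ ω‖ ≤ c)
    (hC : Integrable C μ) (hf : f =ᵐ[μ] μ[C | m]) :
    ∫ ω, φ ω * (f ω - C ω) ∂μ = 0 := by
  have hφ' : AEStronglyMeasurable φ μ := (hφ.mono hm).aestronglyMeasurable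
  have hφC : Integrable (φ * C) μ := hC.bdd_mul hφ' hφc
  have hφf : Integrable (φ * f) μ := (integrable_condExp.congr hf.symm).bdd_mul hφ' hφc
  have hpull : μ[φ * C | m] =ᵐ[μ] φ * f :=
    (condExp_mul_of_stronglyMeasurable_left hφ hφC hC).trans hf.symm.mul_left
  calc ∫ ω, φ ω * (f ω - C ω) ∂μ = ∫ ω, (φ * f) ω ∂μ - ∫ ω, (φ * C) ω ∂μ := by
        simp_rw [mul_sub]; exact integral_sub hφf hφC
    _ = 0 := by rw [← integral_condExp hm (f := φ * C), integral_congr_ae hpull, sub_self]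

theorem abs_sub_le_one_of_mem_Icc {a b : ℝ} (ha : a ∈ Icc 0 1) (hb : b ∈ Icc 0 1) :
    |a - b| ≤ 1 :=
  abs_sub_le_of_nonneg_of_le ha.1 ha.2 hb.1 hb.2

theorem sq_mul_sub_sq_sub_sub_sq_le {q a b c : ℝ} (hq : q = 0 ∨ q = 1) (ha : a ∈ Icc 0 1)
    (hb : b ∈ Icc 0 1) (hc : c ∈ Icc 0 1) :
    (q * ((a - c) ^ 2 - (b - c) ^ 2)) ^ 2 ≤ 4 * (q * (a - b) ^ 2) := by
  have hfactor : (a - c) ^ 2 - (b - c) ^ 2 = (a - b) * (a + b - 2 * c) := by ring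
  have hmid : (a + b - 2 * c) ^ 2 ≤ 4 := by
    nlinarith [ha.1, ha.2, hb.1, hb.2, hc.1, hc.2]
  rcases hq with rfl | rfl
  · simp
  · rw [hfactor, one_mul, one_mul, mul_pow]
    nlinarith [sq_nonneg (a - b)]

section ExcessSquareLoss

variable {Ω : Type*} {m mΩ : MeasurableSpace Ω} {μ : Measure Ω} [IsFiniteMeasure μ]
  {Q G F C : Ω → ℝ}

theorem integrable_mul_sub_sq (hQ : StronglyMeasurable Q) (hG : StronglyMeasurable G)
    (hF : StronglyMeasurable F) (hQ01 : ∀ ω, Q ω = 0 ∨ Q ω = 1) (hG01 : ∀ ω, G ω ∈ Icc 0 1)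
    (hF01 : ∀ ω, F ω ∈ Icc 0 1) :
    Integrable (fun ω => Q ω * (G ω - F ω) ^ 2) μ := by
  refine .of_bound (hQ.mul ((hG.sub hF).pow 2)).aestronglyMeasurable 1 (ae_of_all _ fun ω => ?_)
  rcases hQ01 ω with h | h <;> simp [h, abs_sub_le_one_of_mem_Icc (hG01 ω) (hF01 ω)]

theorem integral_mul_sq_sub_sub_sq_eq_of_ae_eq_condExp (hm : m ≤ mΩ)
    (hQ : StronglyMeasurable[m] Q) (hG : StronglyMeasurable[m] G) (hF : StronglyMeasurable[m] F)
    (hQ01 : ∀ ω, Q ω = 0 ∨ Q ω = 1) (hG01 : ∀ ω, G ω ∈ Icc 0 1) (hF01 : ∀ ω, F ω ∈ Icc 0 1)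
    (hC : Integrable C μ) (hFC : F =ᵐ[μ] μ[C | m]) :
    ∫ ω, Q ω * ((G ω - C ω) ^ 2 - (F ω - C ω) ^ 2) ∂μ = ∫ ω, Q ω * (G ω - F ω) ^ 2 ∂μ := by
  have hφ : StronglyMeasurable[m] (Q * (G - F)) := hQ.mul (hG.sub hF)
  have hφ_le : ∀ ω, ‖(Q * (G - F)) ω‖ ≤ 1 := fun ω => by
    rcases hQ01 ω with h | h <;> simp [h, abs_sub_le_one_of_mem_Icc (hG01 ω) (hF01 ω)]
  have hcross : Integrable (fun ω => (Q * (G - F)) ω * (F ω - C ω)) μ :=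
    ((integrable_condExp.congr hFC.symm).sub hC).bdd_mul (hφ.mono hm).aestronglyMeasurable
      (ae_of_all _ hφ_le)
  have hdecomp : ∀ ω, Q ω * ((G ω - C ω) ^ 2 - (F ω - C ω) ^ 2) =
      Q ω * (G ω - F ω) ^ 2 + 2 * ((Q * (G - F)) ω * (F ω - C ω)) := fun ω => by
    simp only [Pi.mul_apply, Pi.sub_apply]; ring
  simp_rw [hdecomp]
  rw [integral_add (integrable_mul_sub_sq (hQ.mono hm) (hG.mono hm) (hF.mono hm) hQ01 hG01 hF01)
    (hcross.const_mul 2), integral_const_mul,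
    integral_mul_sub_eq_zero_of_ae_eq_condExp hm hφ (ae_of_all _ hφ_le) hC hFC, mul_zero, add_zero]

theorem integral_sq_mul_sq_sub_sub_sq_le (hQ : StronglyMeasurable Q) (hG : StronglyMeasurable G)
    (hF : StronglyMeasurable F) (hQ01 : ∀ ω, Q ω = 0 ∨ Q ω = 1) (hG01 : ∀ ω, G ω ∈ Icc 0 1)
    (hF01 : ∀ ω, F ω ∈ Icc 0 1) (hC01 : ∀ᵐ ω ∂μ, C ω ∈ Icc 0 1) :
    ∫ ω, (Q ω * ((G ω - C ω) ^ 2 - (F ω - C ω) ^ 2)) ^ 2 ∂μ ≤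
      4 * ∫ ω, Q ω * (G ω - F ω) ^ 2 ∂μ := by
  rw [← integral_const_mul]
  refine integral_mono_of_nonneg (ae_of_all _ fun ω => sq_nonneg _)
    ((integrable_mul_sub_sq hQ hG hF hQ01 hG01 hF01).const_mul 4) ?_
  filter_upwards [hC01] with ω hCω
  exact sq_mul_sub_sq_sub_sub_sq_le (hQ01 ω) (hG01 ω) (hF01 ω) hCω

end ExcessSquareLoss

/-- Lemma `lem:regret_transform`: mean and variance of the
excess square loss.  On a probability space `(Ω, μ)`, let `X : Ω → 𝒳` be
measurable, `C : Ω → ℝ` integrable with `0 ≤ C ≤ 1` a.s., `g, f⋆ : 𝒳 → ℝ`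
measurable with values in `[0,1]`, and `q : 𝒳 → {0,1}` measurable, with
`Q = q ∘ X`.  Assume realizability: `f⋆ ∘ X` is a version of the conditional
expectation of `C` given `σ(X)`.  With
`M = Q * ((g(X) - C)² - (f⋆(X) - C)²)` we have
`E[M] = E[Q (g(X) - f⋆(X))²]`, `Var[M] ≤ E[M²] ≤ 4 E[M]`, and
`4 E[M] = 4 E[Q (g(X) - f⋆(X))²]`. -/
theorem stmt_4 {Ω 𝒳 : Type*} [MeasurableSpace Ω] [MeasurableSpace 𝒳]
    (μ : Measure Ω) [IsProbabilityMeasure μ]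
    (X : Ω → 𝒳) (hX : Measurable X)
    (C : Ω → ℝ) (hC : Integrable C μ)
    (hC01 : ∀ᵐ ω ∂μ, C ω ∈ Set.Icc (0 : ℝ) 1)
    (g fstar : 𝒳 → ℝ) (hg : Measurable g) (hfstar : Measurable fstar)
    (hg01 : ∀ x, g x ∈ Set.Icc (0 : ℝ) 1)
    (hfstar01 : ∀ x, fstar x ∈ Set.Icc (0 : ℝ) 1)
    (q : 𝒳 → ℝ) (hq : Measurable q) (hq01 : ∀ x, q x = 0 ∨ q x = 1)
    (hrealizable :
      (fun ω => fstar (X ω)) =ᵐ[μ] μ[C | MeasurableSpace.comap X inferInstance])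
    (M : Ω → ℝ)
    (hM : ∀ ω, M ω = q (X ω) * ((g (X ω) - C ω) ^ 2 - (fstar (X ω) - C ω) ^ 2)) :
    (∫ ω, M ω ∂μ = ∫ ω, q (X ω) * (g (X ω) - fstar (X ω)) ^ 2 ∂μ) ∧
    ProbabilityTheory.variance M μ ≤ ∫ ω, (M ω) ^ 2 ∂μ ∧
    (∫ ω, (M ω) ^ 2 ∂μ ≤ 4 * ∫ ω, M ω ∂μ) ∧
    4 * ∫ ω, M ω ∂μ = 4 * ∫ ω, q (X ω) * (g (X ω) - fstar (X ω)) ^ 2 ∂μ := by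
  have hXσ : Measurable[MeasurableSpace.comap X inferInstance] X := comap_measurable X
  have hq01X (ω : Ω) := hq01 (X ω)
  have hg01X (ω : Ω) := hg01 (X ω)
  have hfstar01X (ω : Ω) := hfstar01 (X ω)
  have hmean := integral_mul_sq_sub_sub_sq_eq_of_ae_eq_condExp hX.comap_le
    (hq.comp hXσ).stronglyMeasurable (hg.comp hXσ).stronglyMeasurable
    (hfstar.comp hXσ).stronglyMeasurable hq01X hg01X hfstar01X hC hrealizable
  have hsq := integral_sq_mul_sq_sub_sub_sq_le (hq.comp hX).stronglyMeasurable
    (hg.comp hX).stronglyMeasurable (hfstar.comp hX).stronglyMeasurable hq01X hg01X hfstar01X hC01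
  have hM_meas : AEStronglyMeasurable M μ := by
    rw [funext hM]
    exact (hq.comp hX).aestronglyMeasurable.mul
      ((((hg.comp hX).aestronglyMeasurable.sub hC.1).pow 2).sub
        (((hfstar.comp hX).aestronglyMeasurable.sub hC.1).pow 2))
  simp only [Function.comp_apply, ← hM] at hmean hsq
  exact ⟨hmean, by simpa using variance_le_expectation_sq hM_meas, hmean ▸ hsq, by rw [hmean]⟩
end

section
/- Fix an integer i ≥ 1, a finite set G, reals τ ∈ ℝ and β₁ > 0, numbers ξ_1,…,ξ_i ∈ [−1,1], for each g ∈ G numbers ℓ(g,1),…,ℓ(g,i) ∈ [−1,1], and a tree process 𝒬 of depth i. Let ε = (ε_1,…,ε_i) be drawn uniformly at random from {−1,+1}^i. Then P_ε[ max_{g ∈ G} Σ_{j=1}^i ( ε_j 𝒬_j(ε)·((1+β₁) ℓ(g,j)² + 2 ξ_j ℓ(g,j)) − β₁ 𝒬_j(ε) ℓ(g,j)² ) ≥ τ ] ≤ |G| · exp(−2 β₁ τ / (3+β₁)²). The same bound holds with (1+β₁) replaced by (1−β₁) in the ε_j-multiplied term. -/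
open scoped Classical

/-- The sign associated to a boolean coordinate: `+1` or `-1`. -/
noncomputable def sgn (b : Bool) : ℝ := if b then 1 else -1

lemma core (n : ℕ) (c d : Fin n → (Fin n → Bool) → ℝ)
    (hc : ∀ (j : Fin n) (ε ε' : Fin n → Bool), (∀ k, k < j → ε k = ε' k) → c j ε = c j ε')
    (hd : ∀ (j : Fin n) (ε ε' : Fin n → Bool), (∀ k, k < j → ε k = ε' k) → d j ε = d j ε')
    (hcosh : ∀ j ε, Real.cosh (c j ε) ≤ Real.exp (d j ε)) :
    ∑ ε : Fin n → Bool, Real.exp (∑ j, (sgn (ε j) * c j ε - d j ε)) ≤ 2 ^ n := by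
  induction n with
  | zero => simp
  | succ n ih =>
    set e : (Fin n → Bool) × Bool ≃ (Fin (n+1) → Bool) :=
      { toFun := fun p => Fin.snoc p.1 p.2
        invFun := fun ε => (fun j => ε j.castSucc, ε (Fin.last n))
        left_inv := by
          rintro ⟨ε', x⟩
          simp
        right_inv := by
          intro ε
          funext j
          induction j using Fin.lastCases with
          | last => simp
          | cast j => simp } with he
    rw [← Equiv.sum_comp e, Fintype.sum_prod_type]
    have hagree : ∀ (ε' : Fin n → Bool) (x : Bool) (k : Fin (n+1)), (k : ℕ) < n →
        (Fin.snoc ε' x : Fin (n+1) → Bool) k = (Fin.snoc ε' true : Fin (n+1) → Bool) k := by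
      intro ε' x k hk
      have hk2 : k = Fin.castSucc ⟨(k : ℕ), hk⟩ := by ext; simp
      rw [hk2, Fin.snoc_castSucc, Fin.snoc_castSucc]
    set c' : Fin n → (Fin n → Bool) → ℝ := fun j ε' => c j.castSucc (Fin.snoc ε' true) with hc'
    set d' : Fin n → (Fin n → Bool) → ℝ := fun j ε' => d j.castSucc (Fin.snoc ε' true) with hd'
    have key : ∀ (ε' : Fin n → Bool) (x : Bool),
        (∑ j : Fin (n+1), (sgn ((Fin.snoc ε' x : Fin (n+1) → Bool) j) * c j (Fin.snoc ε' x)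
            - d j (Fin.snoc ε' x)))
          = (∑ j : Fin n, (sgn (ε' j) * c' j ε' - d' j ε'))
            + (sgn x * c (Fin.last n) (Fin.snoc ε' true) - d (Fin.last n) (Fin.snoc ε' true)) := by
      intro ε' x
      rw [Fin.sum_univ_castSucc]
      congr 1
      · apply Finset.sum_congr rfl
        intro j _
        have hlt : ∀ k : Fin (n+1), k < j.castSucc → (k : ℕ) < n :=
          fun k hk => lt_of_lt_of_le (Fin.lt_iff_val_lt_val.mp hk) (Nat.le_of_lt_succ j.castSucc.is_lt)
        have hcc : c j.castSucc (Fin.snoc ε' x) = c' j ε' :=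
          hc j.castSucc _ _ (fun k hk => hagree ε' x k (hlt k hk))
        have hdd : d j.castSucc (Fin.snoc ε' x) = d' j ε' :=
          hd j.castSucc _ _ (fun k hk => hagree ε' x k (hlt k hk))
        rw [hcc, hdd, Fin.snoc_castSucc]
      · have hlt : ∀ k : Fin (n+1), k < Fin.last n → (k : ℕ) < n :=
          fun k hk => Fin.lt_iff_val_lt_val.mp hk
        have hcc : c (Fin.last n) (Fin.snoc ε' x) = c (Fin.last n) (Fin.snoc ε' true) :=
          hc _ _ _ (fun k hk => hagree ε' x k (hlt k hk))
        have hdd : d (Fin.last n) (Fin.snoc ε' x) = d (Fin.last n) (Fin.snoc ε' true) :=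
          hd _ _ _ (fun k hk => hagree ε' x k (hlt k hk))
        rw [hcc, hdd, Fin.snoc_last]
    have step : ∀ ε' : Fin n → Bool,
        ∑ x : Bool, Real.exp ((∑ j : Fin n, (sgn (ε' j) * c' j ε' - d' j ε'))
            + (sgn x * c (Fin.last n) (Fin.snoc ε' true) - d (Fin.last n) (Fin.snoc ε' true)))
          ≤ 2 * Real.exp (∑ j : Fin n, (sgn (ε' j) * c' j ε' - d' j ε')) := by
      intro ε'
      set S := ∑ j : Fin n, (sgn (ε' j) * c' j ε' - d' j ε')
      set C := c (Fin.last n) (Fin.snoc ε' true)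
      set D := d (Fin.last n) (Fin.snoc ε' true)
      have hb : ∑ x : Bool, Real.exp (S + (sgn x * C - D))
          = Real.exp S * (Real.exp D)⁻¹ * (2 * Real.cosh C) := by
        rw [Fintype.sum_bool]
        have hst : sgn true = 1 := by simp [sgn]
        have hsf : sgn false = -1 := by simp [sgn]
        rw [hst, hsf, Real.cosh_eq,
          show S + (1 * C - D) = S + -D + C by ring,
          show S + (-1 * C - D) = S + -D + -C by ring]
        simp only [Real.exp_add, Real.exp_neg]
        ring
      rw [hb]
      have h1 : 2 * Real.cosh C ≤ 2 * Real.exp D := by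
        have := hcosh (Fin.last n) (Fin.snoc ε' true)
        linarith
      calc Real.exp S * (Real.exp D)⁻¹ * (2 * Real.cosh C)
          ≤ Real.exp S * (Real.exp D)⁻¹ * (2 * Real.exp D) := by
            apply mul_le_mul_of_nonneg_left h1
            positivity
        _ = 2 * Real.exp S := by
            field_simp
      
    calc ∑ ε' : Fin n → Bool, ∑ x : Bool,
          Real.exp (∑ j : Fin (n+1), (sgn ((e (ε', x)) j) * c j (e (ε', x)) - d j (e (ε', x))))
        ≤ ∑ ε' : Fin n → Bool, 2 * Real.exp (∑ j : Fin n, (sgn (ε' j) * c' j ε' - d' j ε')) := by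
          apply Finset.sum_le_sum
          intro ε' _
          have : ∀ x : Bool, (∑ j : Fin (n+1), (sgn ((e (ε', x)) j) * c j (e (ε', x)) - d j (e (ε', x))))
              = (∑ j : Fin n, (sgn (ε' j) * c' j ε' - d' j ε'))
                + (sgn x * c (Fin.last n) (Fin.snoc ε' true) - d (Fin.last n) (Fin.snoc ε' true)) := by
            intro x
            exact key ε' x
          rw [Finset.sum_congr rfl (fun x _ => by rw [this x])]
          exact step ε'
      _ = 2 * ∑ ε' : Fin n → Bool, Real.exp (∑ j : Fin n, (sgn (ε' j) * c' j ε' - d' j ε')) := by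
          rw [Finset.mul_sum]
      _ ≤ 2 * 2 ^ n := by
          have hpred : ∀ (j : Fin n) (ε₁ ε₂ : Fin n → Bool), (∀ k, k < j → ε₁ k = ε₂ k) →
              ∀ k : Fin (n+1), k < j.castSucc →
                (Fin.snoc ε₁ true : Fin (n+1) → Bool) k = (Fin.snoc ε₂ true : Fin (n+1) → Bool) k := by
            intro j ε₁ ε₂ hag k hk
            have hkn : (k : ℕ) < n :=
              lt_of_lt_of_le (Fin.lt_iff_val_lt_val.mp hk) (Nat.le_of_lt_succ j.castSucc.is_lt)
            have hk2 : k = Fin.castSucc ⟨(k : ℕ), hkn⟩ := by ext; simp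
            rw [hk2, Fin.snoc_castSucc, Fin.snoc_castSucc]
            exact hag ⟨(k : ℕ), hkn⟩ (by simpa [Fin.lt_def] using hk)
          have hih := ih c' d'
            (fun j ε₁ ε₂ hag => hc j.castSucc (Fin.snoc ε₁ true) (Fin.snoc ε₂ true) (hpred j ε₁ ε₂ hag))
            (fun j ε₁ ε₂ hag => hd j.castSucc (Fin.snoc ε₁ true) (Fin.snoc ε₂ true) (hpred j ε₁ ε₂ hag))
            (fun j ε₁ => hcosh j.castSucc (Fin.snoc ε₁ true))
          linarith
      _ = 2 ^ (n+1) := by ring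

lemma main_aux (i : ℕ) {G : Type*} [Fintype G]
    (τ β₁ κ : ℝ) (hβ₁ : 0 < β₁) (hκ : |κ| ≤ 1 + β₁)
    (ξ : Fin i → ℝ) (hξ : ∀ j, |ξ j| ≤ 1)
    (ℓ : G → Fin i → ℝ) (hℓ : ∀ g j, |ℓ g j| ≤ 1)
    (𝒬 : Fin i → (Fin i → Bool) → ℝ)
    (h𝒬01 : ∀ j ε, 𝒬 j ε = 0 ∨ 𝒬 j ε = 1)
    (h𝒬tree : ∀ (j : Fin i) (ε ε' : Fin i → Bool),
      (∀ k : Fin i, k < j → ε k = ε' k) → 𝒬 j ε = 𝒬 j ε') :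
    ((Finset.univ.filter (fun ε : Fin i → Bool => ∃ g : G,
        τ ≤ ∑ j : Fin i,
          (sgn (ε j) * 𝒬 j ε * (κ * ℓ g j ^ 2 + 2 * ξ j * ℓ g j)
            - β₁ * 𝒬 j ε * ℓ g j ^ 2))).card : ℝ) / 2 ^ i
      ≤ (Fintype.card G) * Real.exp (-2 * β₁ * τ / (3 + β₁) ^ 2) := by
  set B : ℝ := 3 + β₁ with hB
  have hB0 : 0 < B := by positivity
  set lam : ℝ := 2 * β₁ / B ^ 2 with hlam
  have hlam0 : 0 < lam := by positivity
  set S : G → (Fin i → Bool) → ℝ := fun g ε => ∑ j : Fin i,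
      (sgn (ε j) * 𝒬 j ε * (κ * ℓ g j ^ 2 + 2 * ξ j * ℓ g j)
        - β₁ * 𝒬 j ε * ℓ g j ^ 2) with hS
  -- per-g Chernoff bound
  have per_g : ∀ g : G,
      ((Finset.univ.filter (fun ε : Fin i → Bool => τ ≤ S g ε)).card : ℝ)
        ≤ 2 ^ i * Real.exp (-(lam * τ)) := by
    intro g
    set c : Fin i → (Fin i → Bool) → ℝ :=
      fun j ε => lam * (𝒬 j ε * (κ * ℓ g j ^ 2 + 2 * ξ j * ℓ g j)) with hc
    set d : Fin i → (Fin i → Bool) → ℝ :=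
      fun j ε => lam * (β₁ * (𝒬 j ε * ℓ g j ^ 2)) with hd
    have hcosh : ∀ j ε, Real.cosh (c j ε) ≤ Real.exp (d j ε) := by
      intro j ε
      rcases h𝒬01 j ε with h | h
      · simp [hc, hd, h]
      · simp only [hc, hd, h, one_mul]
        set L := ℓ g j with hL
        set A := κ * L ^ 2 + 2 * ξ j * L with hA
        have hLa := hℓ g j
        have hAabs : |A| ≤ B * |L| := by
          have h1 : |A| ≤ |κ| * L ^ 2 + 2 * |ξ j| * |L| := by
            calc |A| ≤ |κ * L ^ 2| + |2 * ξ j * L| := abs_add_le _ _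
              _ = |κ| * L ^ 2 + 2 * |ξ j| * |L| := by
                  simp [abs_mul, abs_pow, sq_abs, abs_two]
          have h2 : L ^ 2 ≤ |L| := by
            rw [← sq_abs]
            nlinarith [abs_nonneg L]
          have h3 : |κ| * L ^ 2 ≤ (1 + β₁) * |L| := by
            have : |κ| * L ^ 2 ≤ (1 + β₁) * L ^ 2 := by nlinarith [sq_nonneg L]
            nlinarith [abs_nonneg κ]
          calc |A| ≤ |κ| * L ^ 2 + 2 * |ξ j| * |L| := h1
            _ ≤ (1 + β₁) * |L| + 2 * |L| := by
                have := hξ j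
                nlinarith [abs_nonneg L, abs_nonneg (ξ j)]
            _ = B * |L| := by rw [hB]; ring
        have hA2 : A ^ 2 ≤ B ^ 2 * L ^ 2 := by
          nlinarith [mul_self_le_mul_self (abs_nonneg A) hAabs, sq_abs A, sq_abs L]
        calc Real.cosh (lam * A) ≤ Real.exp ((lam * A) ^ 2 / 2) :=
              Real.cosh_le_exp_half_sq _
          _ ≤ Real.exp (lam * (β₁ * L ^ 2)) := by
              apply Real.exp_le_exp.mpr
              have hkey : lam * B ^ 2 / 2 = β₁ := by
                rw [hlam]; field_simp
              have h5 : lam ^ 2 * A ^ 2 ≤ lam ^ 2 * (B ^ 2 * L ^ 2) :=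
                mul_le_mul_of_nonneg_left hA2 (sq_nonneg lam)
              have : (lam * A) ^ 2 / 2 ≤ lam ^ 2 * (B ^ 2 * L ^ 2) / 2 := by
                rw [mul_pow]; gcongr
              calc (lam * A) ^ 2 / 2 ≤ lam ^ 2 * (B ^ 2 * L ^ 2) / 2 := this
                _ = lam * (lam * B ^ 2 / 2) * L ^ 2 := by ring
                _ = lam * (β₁ * L ^ 2) := by rw [hkey]; ring
    have hcpred : ∀ (j : Fin i) (ε ε' : Fin i → Bool),
        (∀ k, k < j → ε k = ε' k) → c j ε = c j ε' := by
      intro j ε ε' hag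
      simp only [hc, h𝒬tree j ε ε' hag]
    have hdpred : ∀ (j : Fin i) (ε ε' : Fin i → Bool),
        (∀ k, k < j → ε k = ε' k) → d j ε = d j ε' := by
      intro j ε ε' hag
      simp only [hd, h𝒬tree j ε ε' hag]
    have hcore := core i c d hcpred hdpred hcosh
    have hrw : ∀ ε : Fin i → Bool,
        lam * S g ε = ∑ j, (sgn (ε j) * c j ε - d j ε) := by
      intro ε
      rw [hS, Finset.mul_sum]
      apply Finset.sum_congr rfl
      intro j _
      simp only [hc, hd]
      ring
    calc ((Finset.univ.filter (fun ε : Fin i → Bool => τ ≤ S g ε)).card : ℝ)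
        = ∑ ε ∈ Finset.univ.filter (fun ε : Fin i → Bool => τ ≤ S g ε), (1 : ℝ) := by
          simp
      _ ≤ ∑ ε ∈ Finset.univ.filter (fun ε : Fin i → Bool => τ ≤ S g ε),
            Real.exp (lam * S g ε - lam * τ) := by
          apply Finset.sum_le_sum
          intro ε hε
          rw [Finset.mem_filter] at hε
          apply Real.one_le_exp
          nlinarith [hε.2]
      _ ≤ ∑ ε : Fin i → Bool, Real.exp (lam * S g ε - lam * τ) := by
          apply Finset.sum_le_sum_of_subset_of_nonneg (Finset.filter_subset _ _)
          intro ε _ _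
          positivity
      _ = Real.exp (-(lam * τ)) * ∑ ε : Fin i → Bool, Real.exp (lam * S g ε) := by
          rw [Finset.mul_sum]
          apply Finset.sum_congr rfl
          intro ε _
          rw [show lam * S g ε - lam * τ = -(lam * τ) + lam * S g ε by ring, Real.exp_add]
      _ ≤ Real.exp (-(lam * τ)) * 2 ^ i := by
          apply mul_le_mul_of_nonneg_left _ (Real.exp_nonneg _)
          calc ∑ ε : Fin i → Bool, Real.exp (lam * S g ε)
              = ∑ ε : Fin i → Bool, Real.exp (∑ j, (sgn (ε j) * c j ε - d j ε)) := by
                apply Finset.sum_congr rfl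
                intro ε _
                rw [hrw]
            _ ≤ 2 ^ i := hcore
      _ = 2 ^ i * Real.exp (-(lam * τ)) := by ring
  -- union bound
  have hunion : ((Finset.univ.filter (fun ε : Fin i → Bool => ∃ g : G, τ ≤ S g ε)).card : ℝ)
      ≤ ∑ g : G, ((Finset.univ.filter (fun ε : Fin i → Bool => τ ≤ S g ε)).card : ℝ) := by
    have hsub : Finset.univ.filter (fun ε : Fin i → Bool => ∃ g : G, τ ≤ S g ε)
        ⊆ Finset.univ.biUnion (fun g : G =>
            Finset.univ.filter (fun ε : Fin i → Bool => τ ≤ S g ε)) := by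
      intro ε hε
      rw [Finset.mem_filter] at hε
      obtain ⟨g, hg⟩ := hε.2
      exact Finset.mem_biUnion.mpr ⟨g, Finset.mem_univ g, Finset.mem_filter.mpr ⟨Finset.mem_univ ε, hg⟩⟩
    calc ((Finset.univ.filter (fun ε : Fin i → Bool => ∃ g : G, τ ≤ S g ε)).card : ℝ)
        ≤ ((Finset.univ.biUnion (fun g : G =>
            Finset.univ.filter (fun ε : Fin i → Bool => τ ≤ S g ε))).card : ℝ) := by
          exact_mod_cast Finset.card_le_card hsub
      _ ≤ ∑ g : G, ((Finset.univ.filter (fun ε : Fin i → Bool => τ ≤ S g ε)).card : ℝ) := by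
          exact_mod_cast Finset.card_biUnion_le
  have hfinal : ((Finset.univ.filter (fun ε : Fin i → Bool => ∃ g : G, τ ≤ S g ε)).card : ℝ)
      ≤ (Fintype.card G) * (2 ^ i * Real.exp (-(lam * τ))) := by
    calc ((Finset.univ.filter (fun ε : Fin i → Bool => ∃ g : G, τ ≤ S g ε)).card : ℝ)
        ≤ ∑ g : G, ((Finset.univ.filter (fun ε : Fin i → Bool => τ ≤ S g ε)).card : ℝ) := hunion
      _ ≤ ∑ _g : G, (2 ^ i * Real.exp (-(lam * τ))) := Finset.sum_le_sum (fun g _ => per_g g)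
      _ = (Fintype.card G) * (2 ^ i * Real.exp (-(lam * τ))) := by
          rw [Finset.sum_const, nsmul_eq_mul, Finset.card_univ]
  have hexp : -(lam * τ) = -2 * β₁ * τ / (3 + β₁) ^ 2 := by
    rw [hlam, hB]; field_simp
  rw [div_le_iff₀ (by positivity : (0:ℝ) < 2 ^ i)]
  calc ((Finset.univ.filter (fun ε : Fin i → Bool => ∃ g : G, τ ≤ S g ε)).card : ℝ)
      ≤ (Fintype.card G) * (2 ^ i * Real.exp (-(lam * τ))) := hfinal
    _ = (Fintype.card G) * Real.exp (-2 * β₁ * τ / (3 + β₁) ^ 2) * 2 ^ i := by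
        rw [hexp]; ring

/-- Lemma `lem:finite_class`: finite class bound.
Fix `i ≥ 1`, a finite nonempty index type `G`, reals `τ` and `β₁ > 0`, noise
values `ξ j ∈ [-1,1]`, losses `ℓ g j ∈ [-1,1]`, and a tree process `𝒬` of
depth `i` (each `𝒬 j` takes values in `{0,1}` and depends only on the first
`j` signs, i.e. on `ε 1, …, ε (j-1)` in 1-based indexing).  For `ε` uniform on
`{-1,+1}^i`,
`P_ε[max_g ∑_j (ε_j 𝒬_j(ε) ((1+β₁) ℓ(g,j)² + 2 ξ_j ℓ(g,j)) - β₁ 𝒬_j(ε) ℓ(g,j)²) ≥ τ]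
  ≤ |G| exp(-2 β₁ τ / (3+β₁)²)`,
and the same bound holds with `1+β₁` replaced by `1-β₁`. -/
theorem stmt_6 (i : ℕ) (hi : 1 ≤ i) {G : Type*} [Fintype G] [Nonempty G]
    (τ β₁ : ℝ) (hβ₁ : 0 < β₁)
    (ξ : Fin i → ℝ) (hξ : ∀ j, |ξ j| ≤ 1)
    (ℓ : G → Fin i → ℝ) (hℓ : ∀ g j, |ℓ g j| ≤ 1)
    (𝒬 : Fin i → (Fin i → Bool) → ℝ)
    (h𝒬01 : ∀ j ε, 𝒬 j ε = 0 ∨ 𝒬 j ε = 1)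
    (h𝒬tree : ∀ (j : Fin i) (ε ε' : Fin i → Bool),
      (∀ k : Fin i, k < j → ε k = ε' k) → 𝒬 j ε = 𝒬 j ε') :
    (((Finset.univ.filter (fun ε : Fin i → Bool => ∃ g : G,
        τ ≤ ∑ j : Fin i,
          (sgn (ε j) * 𝒬 j ε * ((1 + β₁) * ℓ g j ^ 2 + 2 * ξ j * ℓ g j)
            - β₁ * 𝒬 j ε * ℓ g j ^ 2))).card : ℝ) / 2 ^ i
      ≤ (Fintype.card G) * Real.exp (-2 * β₁ * τ / (3 + β₁) ^ 2)) ∧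
    (((Finset.univ.filter (fun ε : Fin i → Bool => ∃ g : G,
        τ ≤ ∑ j : Fin i,
          (sgn (ε j) * 𝒬 j ε * ((1 - β₁) * ℓ g j ^ 2 + 2 * ξ j * ℓ g j)
            - β₁ * 𝒬 j ε * ℓ g j ^ 2))).card : ℝ) / 2 ^ i
      ≤ (Fintype.card G) * Real.exp (-2 * β₁ * τ / (3 + β₁) ^ 2)) := by
  constructor
  · exact main_aux i τ β₁ (1 + β₁) hβ₁
      (by rw [abs_of_pos (by linarith)]) ξ hξ ℓ hℓ 𝒬 h𝒬01 h𝒬tree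
  · exact main_aux i τ β₁ (1 - β₁) hβ₁
      (abs_le.mpr ⟨by linarith, by linarith⟩) ξ hξ ℓ hℓ 𝒬 h𝒬01 h𝒬tree
end

section
/- Let ℓ, ξ ∈ ℝ with |ℓ| ≤ 1 and |ξ| ≤ 1, let q ∈ {0,1}, let β > 0, and set λ = 2β/(3+β)². Let a = q·((1+β)ℓ² + 2ξℓ). Then (1/2)·(exp(λ a) + exp(−λ a)) ≤ exp(λ β q ℓ²); equivalently, the expectation over a uniform random sign ε ∈ {−1,+1} of exp(λ ε a − λ β q ℓ²) is at most 1. -/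
/-- single-step MGF bound for the symmetrized excess loss.
For `|ℓ| ≤ 1`, `|ξ| ≤ 1`, `q ∈ {0,1}`, `β > 0` and `λ = 2β/(3+β)^2`, with
`a = q ((1+β) ℓ² + 2 ξ ℓ)`, the Rademacher MGF satisfies
`(exp (λ a) + exp (-λ a)) / 2 ≤ exp (λ β q ℓ²)`. -/
theorem stmt_8 (ℓ ξ q β lam a : ℝ)
    (hℓ : |ℓ| ≤ 1) (hξ : |ξ| ≤ 1) (hq : q = 0 ∨ q = 1) (hβ : 0 < β)
    (hlam : lam = 2 * β / (3 + β) ^ 2)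
    (ha : a = q * ((1 + β) * ℓ ^ 2 + 2 * ξ * ℓ)) :
    (Real.exp (lam * a) + Real.exp (-(lam * a))) / 2
      ≤ Real.exp (lam * β * q * ℓ ^ 2) := by
  have hcosh : (Real.exp (lam * a) + Real.exp (-(lam * a))) / 2 = Real.cosh (lam * a) := by
    rw [Real.cosh_eq]
  rw [hcosh]
  refine (Real.cosh_le_exp_half_sq _).trans (Real.exp_le_exp.mpr ?_)
  rcases hq with hq | hq
  · simp [hq, ha]
  · subst hq ha hlam
    have h3 : (0:ℝ) < (3 + β) ^ 2 := by positivity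
    have habs : |(1:ℝ) * ((1 + β) * ℓ ^ 2 + 2 * ξ * ℓ)| ≤ (3 + β) * |ℓ| := by
      rw [one_mul]
      calc |(1 + β) * ℓ ^ 2 + 2 * ξ * ℓ| ≤ |(1 + β) * ℓ ^ 2| + |2 * ξ * ℓ| := abs_add_le _ _
        _ = (1 + β) * |ℓ| ^ 2 + 2 * |ξ| * |ℓ| := by
            rw [abs_mul, abs_mul, abs_mul, abs_pow, abs_two,
              abs_of_pos (by linarith : (0:ℝ) < 1 + β)]
        _ ≤ (3 + β) * |ℓ| := by
            have h0 := abs_nonneg ℓ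
            have h1 : |ℓ| ^ 2 ≤ |ℓ| := by nlinarith [abs_nonneg ℓ]
            have h2 : |ξ| * |ℓ| ≤ |ℓ| := by nlinarith [abs_nonneg ℓ, abs_nonneg ξ]
            nlinarith [mul_le_mul_of_nonneg_left h1 (by linarith : (0:ℝ) ≤ 1 + β)]
    have hsq : ((1:ℝ) * ((1 + β) * ℓ ^ 2 + 2 * ξ * ℓ)) ^ 2 ≤ (3 + β) ^ 2 * ℓ ^ 2 := by
      have := sq_le_sq' (neg_le_of_abs_le habs) (le_of_abs_le habs)
      calc _ ≤ ((3 + β) * |ℓ|) ^ 2 := this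
        _ = (3 + β) ^ 2 * ℓ ^ 2 := by rw [mul_pow, sq_abs]
    set A := (1:ℝ) * ((1 + β) * ℓ ^ 2 + 2 * ξ * ℓ) with hA
    have hlampos : 0 < 2 * β / (3 + β) ^ 2 := by positivity
    have key : (2 * β / (3 + β) ^ 2) * A ^ 2 ≤ 2 * β * ℓ ^ 2 := by
      rw [div_mul_eq_mul_div, div_le_iff₀ h3]
      nlinarith [hsq, hβ.le]
    calc (2 * β / (3 + β) ^ 2 * A) ^ 2 / 2
        = (2 * β / (3 + β) ^ 2) * ((2 * β / (3 + β) ^ 2) * A ^ 2) / 2 := by ring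
      _ ≤ (2 * β / (3 + β) ^ 2) * (2 * β * ℓ ^ 2) / 2 := by
          have := mul_le_mul_of_nonneg_left key hlampos.le
          linarith
      _ = 2 * β / (3 + β) ^ 2 * β * 1 * ℓ ^ 2 := by ring
end
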